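/- For all integers d ≥ 0 and n ≥ 2(d+1), every triangle-free (i.e., K₃-free) 𝐁_{n,d}-free graph G satisfies χ(G) ≤ n−1. -/

import Mathlib

open SimpleGraph

/-- The join `K_m + H` construction: disjoint union with all edges in between. -/
def graphJoin {α β : Type*} (G : SimpleGraph α) (H : SimpleGraph β) :
    SimpleGraph (α ⊕ β) where
  Adj x y :=
    match x, y with
    | Sum.inl a, Sum.inl b => G.Adj a b
    | Sum.inr a, Sum.inr b => H.Adj a b
    | Sum.inl _, Sum.inr _ => True
    | Sum.inr _, Sum.inl _ => True
  symm := ⟨by rintro (a|a) (b|b) h <;> simp_all [SimpleGraph.adj_comm]⟩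
  loopless := ⟨by rintro (a|a) h <;> simp_all⟩

/-- `InB n d V H` says that the graph `H` on vertex type `V` belongs (up to
isomorphism) to the family `𝐁_{n,d}`: `𝐁_{n,0}` consists of the graphs on `n`
vertices having a vertex adjacent to all other vertices, and for `d > 0`,
`𝐁_{n,d} = ⋃_{m=2d}^{n−2} { K_{n−m−2} + (K₂ ∪ H') : H' ∈ 𝐁_{m,d−1} }`. -/
def InB : ℕ → ℕ → (V : Type) → SimpleGraph V → Prop
  | n, 0, V, H => Nat.card V = n ∧ ∃ v : V, ∀ w : V, w ≠ v → H.Adj v w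
  | n, d + 1, _, H => ∃ m : ℕ, 2 * (d + 1) ≤ m ∧ m ≤ n - 2 ∧
      ∃ (W : Type) (H' : SimpleGraph W), InB m d W H' ∧
        Nonempty (H ≃g graphJoin (⊤ : SimpleGraph (Fin (n - m - 2)))
          ((⊤ : SimpleGraph (Fin 2)) ⊕g H'))

/-- A graph `G` is `𝐁_{n,d}`-free if no induced subgraph of `G` is isomorphic to
a member of `𝐁_{n,d}`. -/
def BFree (n d : ℕ) {V : Type} (G : SimpleGraph V) : Prop :=
  ∀ (W : Type) (H : SimpleGraph W), InB n d W H → IsEmpty (H ↪g G)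

/-!
Induction on `d`. A `𝐁_{n,0}`-free graph has maximum degree at most `n - 2`, so greedy colouring
uses `n - 1` colours. For `d + 1`, either `G` is `𝐁_{n-2,d}`-free and induction applies, or it
contains an induced copy `H` of a member of `𝐁_{n-2,d}`. In the latter case no edge `xy` of `G` can
avoid the neighbourhood of `H`, since `xy` together with `H` would induce `K₂ ∪ H ∈ 𝐁_{n,d+1}`.
Colouring each vertex by one of its neighbours in `H`, or by a single extra colour if it has none,
is proper because `G` is triangle-free; this uses `(n - 2) + 1` colours.
-/

open Finset

namespace SimpleGraph

variable {V : Type*} {G : SimpleGraph V}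

theorem colorable_of_forall_degree_le [Fintype V] [DecidableRel G.Adj] {k : ℕ}
    (h : ∀ v, G.degree v ≤ k) : G.Colorable (k + 1) := by
  classical
  suffices ∀ s : Finset V, ∃ c : V → Fin (k + 1), ∀ u ∈ s, ∀ v ∈ s, G.Adj u v → c u ≠ c v by
    obtain ⟨c, hc⟩ := this univ
    exact ⟨⟨c, fun huv => hc _ (mem_univ _) _ (mem_univ _) huv⟩⟩
  intro s
  induction s using Finset.induction_on with
  | empty => exact ⟨fun _ => 0, by simp⟩
  | insert a s _ ih =>
    obtain ⟨c, hc⟩ := ih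
    have hlt : #((G.neighborFinset a).image c) < #(univ : Finset (Fin (k + 1))) := by
      calc #((G.neighborFinset a).image c) ≤ G.degree a :=
            (card_image_le).trans (card_neighborFinset_eq_degree G a).le
        _ < k + 1 := Nat.lt_succ_of_le (h a)
        _ = #univ := (card_fin _).symm
    obtain ⟨col, -, hcol⟩ := exists_mem_notMem_of_card_lt_card hlt
    have hfresh : ∀ v, G.Adj a v → Function.update c a col v ≠ col := fun v hv => by
      rw [Function.update_of_ne (G.ne_of_adj hv).symm]
      exact fun hv' => hcol (mem_image.2 ⟨v, (mem_neighborFinset G a v).2 hv, hv'⟩)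
    refine ⟨Function.update c a col, fun u hu v hv huv => ?_⟩
    rcases eq_or_ne u a with rfl | hua
    · simpa using (hfresh v huv).symm
    rcases eq_or_ne v a with rfl | hva
    · simpa using hfresh u huv.symm
    rw [Function.update_of_ne hua, Function.update_of_ne hva]
    exact hc u ((mem_insert.1 hu).resolve_left hua) v ((mem_insert.1 hv).resolve_left hva) huv

theorem colorable_card_add_one_of_cliqueFree_three {W : Type*} [Fintype W] (f : W → V)
    (htf : G.CliqueFree 3) (hf : ∀ x y, G.Adj x y → ∃ w, G.Adj (f w) x ∨ G.Adj (f w) y) :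
    G.Colorable (Fintype.card W + 1) := by
  classical
  let c : V → Option W := fun x => if h : ∃ w, G.Adj (f w) x then some h.choose else none
  have hc : ∀ {x y}, G.Adj x y → c x ≠ c y := by
    intro x y hxy hcxy
    by_cases hx : ∃ w, G.Adj (f w) x <;> by_cases hy : ∃ w, G.Adj (f w) y <;>
      simp only [c, hx, hy, dif_pos, dif_neg, not_false_eq_true, reduceCtorEq,
        Option.some.injEq] at hcxy
    · have hwy : G.Adj (f hx.choose) y := hcxy ▸ hy.choose_spec
      exact htf _ (is3Clique_triple_iff.2 ⟨hx.choose_spec, hwy, hxy⟩)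
    · obtain ⟨w, hw | hw⟩ := hf x y hxy
      exacts [hx ⟨w, hw⟩, hy ⟨w, hw⟩]
  simpa using (Coloring.mk c hc).colorable

def Embedding.topSumOfAdj {W : Type*} {H : SimpleGraph W} {x y : V} (hxy : G.Adj x y)
    (f : H ↪g G) (hf : ∀ w, ¬G.Adj (f w) x ∧ ¬G.Adj (f w) y) :
    (⊤ : SimpleGraph (Fin 2)) ⊕g H ↪g G where
  toFun := Sum.elim ![x, y] f
  inj' := by
    refine Function.Injective.sumElim ?_ f.injective ?_
    · intro i j hij
      fin_cases i <;> fin_cases j <;> simp_all [G.ne_of_adj hxy]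
    · intro i w hiw
      fin_cases i <;> simp only [Fin.zero_eta, Fin.mk_one, Matrix.cons_val_zero,
        Matrix.cons_val_one] at hiw
      exacts [(hf w).2 (hiw ▸ hxy), (hf w).1 (hiw ▸ hxy.symm)]
  map_rel_iff' := by
    rintro (i | w) (j | w')
    · fin_cases i <;> fin_cases j <;> simp [hxy, hxy.symm]
    · fin_cases i <;> simp [G.adj_comm _ (f w'), hf]
    · fin_cases j <;> simp [hf]
    · simp

end SimpleGraph

def graphJoinIsoOfIsEmpty {α β : Type*} [IsEmpty α] (G : SimpleGraph α) (H : SimpleGraph β) :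
    graphJoin G H ≃g H where
  toEquiv := Equiv.emptySum α β
  map_rel_iff' := by
    rintro (a | a) (b | b)
    exacts [isEmptyElim a, isEmptyElim a, isEmptyElim b, Iff.rfl]

theorem InB.natCard_eq {d n : ℕ} {W : Type} {H : SimpleGraph W} (hH : InB n d W H) :
    Nat.card W = n := by
  induction d generalizing n W H with
  | zero => exact hH.1
  | succ d ih =>
    obtain ⟨m, hm, hmn, W', H', hH', ⟨e⟩⟩ := hH
    have hW' : Nat.card W' = m := ih hH'
    have : Finite W' := Nat.finite_of_card_ne_zero (by omega)
    rw [Nat.card_congr e.toEquiv, Nat.card_sum, Nat.card_sum, hW']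
    simp only [Nat.card_eq_fintype_card, Fintype.card_fin]
    omega

theorem InB.top_sum {d m : ℕ} {W : Type} {H : SimpleGraph W} (hH : InB m d W H)
    (hm : 2 * (d + 1) ≤ m) :
    InB (m + 2) (d + 1) (Fin 2 ⊕ W) ((⊤ : SimpleGraph (Fin 2)) ⊕g H) := by
  have : IsEmpty (Fin (m + 2 - m - 2)) := by rw [show m + 2 - m - 2 = 0 by omega]; infer_instance
  exact ⟨m, hm, by omega, W, H, hH, ⟨(graphJoinIsoOfIsEmpty _ _).symm⟩⟩

section BFree

variable {V : Type} {G : SimpleGraph V}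

theorem degree_lt_of_bFree_zero [Fintype V] [DecidableRel G.Adj] {n : ℕ} (hn : n ≠ 0)
    (hG : BFree n 0 G) (v : V) : G.degree v < n - 1 := by
  classical
  by_contra! hdeg
  obtain ⟨t, ht, htcard⟩ :=
    exists_subset_card_eq ((card_neighborFinset_eq_degree G v).ge.trans' hdeg)
  have hvt : v ∉ t := fun hv => G.irrefl ((mem_neighborFinset G v v).1 (ht hv))
  let s : Set V := ↑(insert v t)
  have hB : InB n 0 s (G.induce s) := by
    refine ⟨?_, ⟨v, by simp [s]⟩, fun w hw => ?_⟩
    · rw [Nat.card_coe_set_eq, Set.ncard_coe_finset, card_insert_of_notMem hvt, htcard]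
      omega
    · have hwv : (w : V) ≠ v := fun h => hw (Subtype.ext h)
      have hwt : (w : V) ∈ t := (mem_insert.1 (mem_coe.1 w.2)).resolve_left hwv
      exact (mem_neighborFinset G v w).1 (ht hwt)
  exact (hG _ _ hB).false (Embedding.induce s)

theorem exists_adj_of_bFree_succ {d m : ℕ} (hm : 2 * (d + 1) ≤ m) (hG : BFree (m + 2) (d + 1) G)
    {W : Type} {H : SimpleGraph W} (hH : InB m d W H) (f : H ↪g G) {x y : V}
    (hxy : G.Adj x y) : ∃ w, G.Adj (f w) x ∨ G.Adj (f w) y := by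
  by_contra! hf
  exact (hG _ _ (hH.top_sum hm)).false (Embedding.topSumOfAdj hxy f hf)

theorem colorable_of_cliqueFree_three_of_bFree {d n : ℕ} (hn : 2 * (d + 1) ≤ n) [Fintype V]
    (htf : G.CliqueFree 3) (hG : BFree n d G) : G.Colorable (n - 1) := by
  classical
  induction d generalizing n with
  | zero =>
    have hdeg : ∀ v, G.degree v ≤ n - 2 := fun v => by
      have := degree_lt_of_bFree_zero (by omega) hG v
      omega
    exact (colorable_of_forall_degree_le hdeg).mono (by omega)
  | succ d ih =>
    obtain ⟨m, rfl⟩ : ∃ m, n = m + 2 := ⟨n - 2, by omega⟩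
    by_cases hB : BFree m d G
    · exact (ih (by omega) hB).mono (by omega)
    obtain ⟨W, H, hH, ⟨f⟩⟩ : ∃ W H, InB m d W H ∧ Nonempty (H ↪g G) := by
      simpa [BFree] using hB
    have hW : Nat.card W = m := hH.natCard_eq
    have : Finite W := Nat.finite_of_card_ne_zero (by omega)
    have := Fintype.ofFinite W
    have hcol := colorable_card_add_one_of_cliqueFree_three f htf
      fun x y hxy => exists_adj_of_bFree_succ (by omega) hG hH f hxy
    rwa [← Nat.card_eq_fintype_card, hW] at hcol

end BFree

theorem stmt_19 (d n : ℕ) (hn : 2 * (d + 1) ≤ n)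
    (V : Type) [Fintype V] (G : SimpleGraph V)
    (htf : G.CliqueFree 3) (hG : BFree n d G) :
    G.chromaticNumber ≤ ((n - 1 : ℕ) : ℕ∞) :=
  (colorable_of_cliqueFree_three_of_bFree hn htf hG).chromaticNumber_le
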